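/- For every k > 1 and m ≥ 2, the k-DNF set D' (consisting of the weight-constraint sets W^j_m(x^j) for 1 ≤ j < k together with, for each ν ∈ [m(k−1)], the formula ⋁_{(i_1,…,i_{k−1}) ∈ [m(k−1)]^{k−1}} (x^1_{i_1} ∧ ⋯ ∧ x^{k−1}_{i_{k−1}} ∧ y^{ν,1}_{i_1,…,i_{k−1}}) and, for each ν ∈ [m(k−1)] and each 2 ≤ r ≤ k+1, the formula ⋁_{(i_1,…,i_{k−1}) ∈ [m(k−1)]^{k−1}} (x^1_{i_1} ∧ ⋯ ∧ x^{k−1}_{i_{k−1}} ∧ ¬y^{ν,r}_{i_1,…,i_{k−1}})) implies the [k+1]-XOR-CNF formula G = ⋀_{ν ∈ [m(k−1)]} ⋁_{(i_1,…,i_{k−1}) ∈ [m(k−1)]^{k−1}} ⊕_{r=1}^{k+1} y^{ν,r}_{i_1,…,i_{k−1}}: every total truth assignment satisfying every formula of D' satisfies G. -/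
import Mathlib


namespace PaperKDNF

/-- A literal: a propositional variable together with a polarity
(`true` means the variable occurs unnegated). -/
abbrev Lit (V : Type) := V × Bool

/-- A term: a conjunction of literals, represented as a finite set of literals.
The empty term is the constant true. -/
abbrev Trm (V : Type) := Finset (Lit V)

/-- A DNF formula: a disjunction of terms, represented as a finite set of terms. -/
abbrev DNF (V : Type) := Finset (Trm V)

/-- A DNF set: a finite set of DNF formulas, interpreted as their conjunction. -/
abbrev DNFSet (V : Type) := Finset (DNF V)

/-- Evaluation of a literal under a truth assignment. -/
def litEval {V : Type} (α : V → Bool) (l : Lit V) : Bool :=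
  if l.2 then α l.1 else !(α l.1)

/-- A term is satisfied iff all its literals are true. -/
def trmSat {V : Type} (α : V → Bool) (t : Trm V) : Prop :=
  ∀ l ∈ t, litEval α l = true

/-- A DNF formula is satisfied iff some term in it is satisfied. -/
def dnfSat {V : Type} (α : V → Bool) (F : DNF V) : Prop :=
  ∃ t ∈ F, trmSat α t

/-- A DNF set is satisfied iff every formula in it is satisfied. -/
def setSat {V : Type} (α : V → Bool) (D : DNFSet V) : Prop :=
  ∀ F ∈ D, dnfSat α F

/-- A DNF set is satisfiable iff some truth assignment satisfies it. -/
def Satisfiable {V : Type} (D : DNFSet V) : Prop :=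
  ∃ α : V → Bool, setSat α D

/-- A `k`-DNF formula: all terms have at most `k` literals. -/
def IsKDNF {V : Type} (k : ℕ) (F : DNF V) : Prop :=
  ∀ t ∈ F, t.card ≤ k

/-- A `k`-DNF set: a finite set of `k`-DNF formulas. -/
def IsKDNFSet {V : Type} (k : ℕ) (D : DNFSet V) : Prop :=
  ∀ F ∈ D, IsKDNF k F

/-- The variables occurring in a term. -/
def trmVars {V : Type} [DecidableEq V] (t : Trm V) : Finset V :=
  t.image Prod.fst

/-- The variables occurring in a DNF formula. -/
def dnfVars {V : Type} [DecidableEq V] (F : DNF V) : Finset V :=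
  F.biUnion trmVars

/-- The variables occurring in a DNF set. -/
def setVars {V : Type} [DecidableEq V] (D : DNFSet V) : Finset V :=
  D.biUnion dnfVars

/-- The DNF set obtained from `D` by replacing the term `t` of the formula `F ∈ D`
by the term `t'`. -/
def weaken {V : Type} [DecidableEq V] (D : DNFSet V) (F : DNF V) (t t' : Trm V) :
    DNFSet V :=
  insert (insert t' (F.erase t)) (D.erase F)

/-- A DNF set is minimally unsatisfiable iff it is unsatisfiable and replacing any
single term `t` appearing in a formula `F` of the set by any proper subterm `t'` of
`t` (obtained by deleting at least one literal; the empty term is the constant true)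
yields a satisfiable set. -/
def MinUnsat {V : Type} [DecidableEq V] (D : DNFSet V) : Prop :=
  ¬ Satisfiable D ∧
    ∀ F ∈ D, ∀ t ∈ F, ∀ t' ⊂ t, Satisfiable (weaken D F t t')

/-- Indices of the `j`-th block `X_j = {x_{(j-1)(k-1)+1}, …, x_{j(k-1)}}` (1-based). -/
def blockX (k j : ℕ) : Finset ℕ := Finset.Ioc ((j-1)*(k-1)) (j*(k-1))

/-- The term `⋀_{i ∈ B} ¬x_i`. -/
def negBlockTerm {V : Type} [DecidableEq V] (xv : ℕ → V) (B : Finset ℕ) : Trm V :=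
  B.image (fun i => (xv i, false))

/-- The term `⋀_{i' ∈ B, i' ≠ i} ¬x_{i'}`. -/
def almostNegTerm {V : Type} [DecidableEq V] (xv : ℕ → V) (B : Finset ℕ) (i : ℕ) :
    Trm V :=
  (B.erase i).image (fun i' => (xv i', false))

/-- Formulas (i)–(ii) of `W_m`: `¬u_j ∨ (u_{j-1} ∧ ⋀_{x ∈ X_j} ¬x)` for
`1 ≤ j ≤ m-1` (for `j = 1` the conjunct `u_{j-1}` is absent). -/
def Wu {V : Type} [DecidableEq V] (k : ℕ) (xv uv : ℕ → V) (j : ℕ) : DNF V :=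
  { {(uv j, false)},
    (if j = 1 then (∅ : Trm V) else {(uv (j-1), true)}) ∪ negBlockTerm xv (blockX k j) }

/-- Formulas (iii)–(iv) of `W_m`:
`¬v_j ∨ u_j ∨ (v_{j-1} ∧ ⋀_{x ∈ X_j} ¬x) ∨ ⋁_{x ∈ X_j} (u_{j-1} ∧ ⋀_{x' ∈ X_j, x' ≠ x} ¬x')`
for `1 ≤ j ≤ m-1` (for `j = 1` the term containing `v_{j-1}` and the conjuncts
`u_{j-1}` are absent). -/
def Wv {V : Type} [DecidableEq V] (k : ℕ) (xv uv vv : ℕ → V) (j : ℕ) : DNF V :=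
  ({ {(vv j, false)}, {(uv j, true)} } : DNF V) ∪
  (if j = 1 then (∅ : DNF V)
    else {insert (vv (j-1), true) (negBlockTerm xv (blockX k j))}) ∪
  (blockX k j).image (fun i =>
    (if j = 1 then (∅ : Trm V) else {(uv (j-1), true)}) ∪ almostNegTerm xv (blockX k j) i)

/-- Formula (v) of `W_m`:
`(v_{m-1} ∧ ⋀_{x ∈ X_m} ¬x) ∨ ⋁_{x ∈ X_m} (u_{m-1} ∧ ⋀_{x' ∈ X_m, x' ≠ x} ¬x')`. -/
def Wlast {V : Type} [DecidableEq V] (m k : ℕ) (xv uv vv : ℕ → V) : DNF V :=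
  insert (insert (vv (m-1), true) (negBlockTerm xv (blockX k m)))
    ((blockX k m).image (fun i =>
      insert (uv (m-1), true) (almostNegTerm xv (blockX k m) i)))

/-- The `k`-DNF set `W_m`, over the `x`-variables `xv 1, …, xv (m(k-1))` and the
auxiliary variables `uv 1, …, uv (m-1)` and `vv 1, …, vv (m-1)`. -/
def Wset {V : Type} [DecidableEq V] (m k : ℕ) (xv uv vv : ℕ → V) : DNFSet V :=
  (Finset.Icc 1 (m-1)).image (Wu k xv uv) ∪
  (Finset.Icc 1 (m-1)).image (Wv k xv uv vv) ∪
  {Wlast m k xv uv vv}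

/-- A clause of an XOR-CNF formula: a disjunction of XORs and negated XORs, where
each disjunct is recorded as the block of variables it is the exclusive or of,
together with its polarity (`true` = unnegated XOR). -/
abbrev XClause (V : Type) := Finset (Finset V × Bool)

/-- The value of the exclusive or of the variables of `B`. -/
def xorVal {V : Type} (α : V → Bool) (B : Finset V) : Bool :=
  decide ((B.filter (fun v => α v = true)).card % 2 = 1)

/-- The value of a possibly negated XOR. -/
def xorLitVal {V : Type} (α : V → Bool) (p : Finset V × Bool) : Bool :=
  if p.2 then xorVal α p.1 else !(xorVal α p.1)

/-- Satisfaction of a single XOR-clause (the empty clause is the constant false). -/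
def xClauseSat {V : Type} (α : V → Bool) (C : XClause V) : Prop :=
  ∃ p ∈ C, xorLitVal α p = true

/-- Satisfaction of an XOR-CNF formula, given as its finite set of clauses. -/
def xCnfSat {V : Type} (α : V → Bool) (Cs : Finset (XClause V)) : Prop :=
  ∀ C ∈ Cs, xClauseSat α C

/-- `(blocks, Cs)` is a `[w]`-XOR-CNF formula: its variables are partitioned into
disjoint blocks of exactly `w` variables each, and every XOR or negated XOR
occurring in a clause is the exclusive or of exactly the variables of one full
block. -/
def IsXorCNF {V : Type} (w : ℕ) (blocks : Finset (Finset V))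
    (Cs : Finset (XClause V)) : Prop :=
  (∀ B ∈ blocks, B.card = w) ∧
  (∀ B ∈ blocks, ∀ B' ∈ blocks, B ≠ B' → Disjoint B B') ∧
  (∀ C ∈ Cs, ∀ p ∈ C, p.1 ∈ blocks)

/-- The variables occurring in an XOR-CNF formula. -/
def xorVars {V : Type} [DecidableEq V] (Cs : Finset (XClause V)) : Finset V :=
  Cs.biUnion (fun C => C.biUnion (fun p => p.1))

/-- The DNF set `D` implies the XOR-CNF formula with clauses `Cs`: every total
truth assignment satisfying every formula of `D` also satisfies every clause of
`Cs`. -/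
def ImpliesXor {V : Type} (D : DNFSet V) (Cs : Finset (XClause V)) : Prop :=
  ∀ α : V → Bool, setSat α D → xCnfSat α Cs

/-- Delete the occurrence `p` of an XOR (or negated XOR) from the clause `C` of
`Cs`; a clause that loses all its disjuncts becomes the constant false. -/
def removeXor {V : Type} [DecidableEq V] (Cs : Finset (XClause V)) (C : XClause V)
    (p : Finset V × Bool) : Finset (XClause V) :=
  insert (C.erase p) (Cs.erase C)

/-- The implication of the XOR-CNF formula `Cs` by the DNF set `D` is precise:
deleting any single XOR or negated XOR occurrence from a clause yields a formula
that `D` does not imply. -/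
def PreciseXor {V : Type} [DecidableEq V] (D : DNFSet V)
    (Cs : Finset (XClause V)) : Prop :=
  ∀ C ∈ Cs, ∀ p ∈ C, ¬ ImpliesXor D (removeXor Cs C p)

/-- The variables of the set `D'` (and of the formula `G`). -/
inductive DVar2 (k : ℕ) where
  | x : ℕ → ℕ → DVar2 k                     -- `x^j_i`
  | xu : ℕ → ℕ → DVar2 k                    -- auxiliary `u`-variable of `W^j_m`
  | xv : ℕ → ℕ → DVar2 k                    -- auxiliary `v`-variable of `W^j_m`
  | y : ℕ → ℕ → (Fin (k-1) → ℕ) → DVar2 k   -- `y^{ν,r}_{i_1,…,i_{k-1}}`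
deriving DecidableEq

/-- All tuples `(i_1, …, i_{k-1}) ∈ [m(k-1)]^{k-1}`. -/
def tuples (m k : ℕ) : Finset (Fin (k-1) → ℕ) :=
  Fintype.piFinset (fun _ => Finset.Icc 1 (m*(k-1)))

/-- The term `x^1_{i_1} ∧ ⋯ ∧ x^{k-1}_{i_{k-1}}`. -/
def xTerm2 (k : ℕ) (t : Fin (k-1) → ℕ) : Trm (DVar2 k) :=
  (Finset.univ : Finset (Fin (k-1))).image (fun j => (DVar2.x (j.1+1) (t j), true))

/-- The formula
`⋁_{(i_1,…,i_{k-1}) ∈ [m(k-1)]^{k-1}} (x^1_{i_1} ∧ ⋯ ∧ x^{k-1}_{i_{k-1}} ∧ y^{ν,1}_{i_1,…,i_{k-1}})`. -/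
def D'pos (m k ν : ℕ) : DNF (DVar2 k) :=
  (tuples m k).image (fun t => insert (DVar2.y ν 1 t, true) (xTerm2 k t))

/-- The formula
`⋁_{(i_1,…,i_{k-1}) ∈ [m(k-1)]^{k-1}} (x^1_{i_1} ∧ ⋯ ∧ x^{k-1}_{i_{k-1}} ∧ ¬y^{ν,r}_{i_1,…,i_{k-1}})`. -/
def D'neg (m k ν r : ℕ) : DNF (DVar2 k) :=
  (tuples m k).image (fun t => insert (DVar2.y ν r t, false) (xTerm2 k t))

/-- The `k`-DNF set `D'`: the `k-1` disjoint copies `W^j_m(x^j)` of the weight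
constraint set, the formulas `D'pos m k ν` for `ν ∈ [m(k-1)]`, and the formulas
`D'neg m k ν r` for `ν ∈ [m(k-1)]` and `2 ≤ r ≤ k+1`. -/
def D'set (m k : ℕ) : DNFSet (DVar2 k) :=
  (Finset.Icc 1 (k-1)).biUnion
      (fun j => Wset m k (DVar2.x j) (DVar2.xu j) (DVar2.xv j)) ∪
  (Finset.Icc 1 (m*(k-1))).image (D'pos m k) ∪
  (Finset.Icc 1 (m*(k-1))).biUnion
      (fun ν => (Finset.Icc 2 (k+1)).image (D'neg m k ν))

/-- The block `{y^{ν,1}_{i_1,…,i_{k-1}}, …, y^{ν,k+1}_{i_1,…,i_{k-1}}}`. -/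
def yBlock (k ν : ℕ) (t : Fin (k-1) → ℕ) : Finset (DVar2 k) :=
  (Finset.Icc 1 (k+1)).image (fun r => DVar2.y ν r t)

/-- The blocks of the `[k+1]`-XOR-CNF formula `G`. -/
def Gblocks (m k : ℕ) : Finset (Finset (DVar2 k)) :=
  (Finset.Icc 1 (m*(k-1))).biUnion (fun ν => (tuples m k).image (yBlock k ν))

/-- The `ν`-th clause of `G`:
`⋁_{(i_1,…,i_{k-1}) ∈ [m(k-1)]^{k-1}} ⊕_{r=1}^{k+1} y^{ν,r}_{i_1,…,i_{k-1}}`. -/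
def Gclause (m k ν : ℕ) : XClause (DVar2 k) :=
  (tuples m k).image (fun t => (yBlock k ν t, true))

/-- The clauses of the `[k+1]`-XOR-CNF formula `G`. -/
def Gclauses (m k : ℕ) : Finset (XClause (DVar2 k)) :=
  (Finset.Icc 1 (m*(k-1))).image (Gclause m k)

section AuxProof

variable {V : Type} [DecidableEq V]

lemma trmSat_false {α : V → Bool} {t : Trm V} (h : trmSat α t) {v : V}
    (hv : (v, false) ∈ t) : α v = false := by
  have := h _ hv
  simpa [litEval] using this

lemma trmSat_true {α : V → Bool} {t : Trm V} (h : trmSat α t) {v : V}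
    (hv : (v, true) ∈ t) : α v = true := by
  have := h _ hv
  simpa [litEval] using this

lemma mem_blockX {k j i : ℕ} : i ∈ blockX k j ↔ (j-1)*(k-1) < i ∧ i ≤ j*(k-1) := by
  simp [blockX, Finset.mem_Ioc]

lemma mem_blockX_succ {k n i : ℕ} :
    i ∈ blockX k (n+1) ↔ n*(k-1) < i ∧ i ≤ (n+1)*(k-1) := by
  simp [blockX, Finset.mem_Ioc]

lemma Wset_atMostOne (m k : ℕ) (hm : 2 ≤ m)
    (xv uv vv : ℕ → V) (α : V → Bool)
    (h : setSat α (Wset m k xv uv vv)) :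
    ∀ i, 0 < i → i ≤ m*(k-1) → ∀ i', 0 < i' → i' ≤ m*(k-1) →
      α (xv i) = true → α (xv i') = true → i = i' := by
  have hWu : ∀ j, 1 ≤ j → j ≤ m-1 → dnfSat α (Wu k xv uv j) := by
    intro j h1 h2
    refine h _ ?_
    unfold Wset
    exact Finset.mem_union_left _ (Finset.mem_union_left _
      (Finset.mem_image_of_mem _ (Finset.mem_Icc.mpr ⟨h1, h2⟩)))
  have hWv : ∀ j, 1 ≤ j → j ≤ m-1 → dnfSat α (Wv k xv uv vv j) := by
    intro j h1 h2
    refine h _ ?_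
    unfold Wset
    exact Finset.mem_union_left _ (Finset.mem_union_right _
      (Finset.mem_image_of_mem _ (Finset.mem_Icc.mpr ⟨h1, h2⟩)))
  have hWl : dnfSat α (Wlast m k xv uv vv) := by
    refine h _ ?_
    unfold Wset
    exact Finset.mem_union_right _ (Finset.mem_singleton_self _)
  -- `u_j` true forces all `x_i` with `i ≤ j*(k-1)` false
  have U : ∀ j, 1 ≤ j → j ≤ m-1 → α (uv j) = true →
      ∀ i, 0 < i → i ≤ j*(k-1) → α (xv i) = false := by
    intro j
    induction j with
    | zero => omega
    | succ n ih =>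
      intro h1 h2 hu i hi1 hi2
      obtain ⟨t, ht, hts⟩ := hWu (n+1) h1 h2
      unfold Wu at ht
      rcases Finset.mem_insert.mp ht with rfl | ht
      · have := trmSat_false hts (Finset.mem_singleton_self _)
        rw [hu] at this; exact absurd this (by simp)
      · rw [Finset.mem_singleton] at ht; subst ht
        have hblk : ∀ i'', i'' ∈ blockX k (n+1) → α (xv i'') = false := by
          intro i'' hi''
          exact trmSat_false hts (Finset.mem_union_right _
            (Finset.mem_image_of_mem _ hi''))
        have hmul : (n+1)*(k-1) = n*(k-1) + (k-1) := by ring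
        by_cases hn : n = 0
        · subst hn
          exact hblk i (mem_blockX_succ.mpr (by omega))
        · by_cases hcase : i ≤ n*(k-1)
          · have hun : α (uv n) = true := by
              refine trmSat_true hts (Finset.mem_union_left _ ?_)
              rw [if_neg (by omega)]
              simpa using Finset.mem_singleton_self ((uv (n+1-1), true) : Lit V)
            exact ih (by omega) (by omega) hun i hi1 hcase
          · exact hblk i (mem_blockX_succ.mpr (by omega))
  -- `v_j` true forces at most one true `x_i` with `i ≤ j*(k-1)`
  have Vlem : ∀ j, 1 ≤ j → j ≤ m-1 → α (vv j) = true →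
      ∀ i, 0 < i → i ≤ j*(k-1) → ∀ i', 0 < i' → i' ≤ j*(k-1) →
        α (xv i) = true → α (xv i') = true → i = i' := by
    intro j
    induction j with
    | zero => omega
    | succ n ih =>
      intro h1 h2 hv i hi1 hi2 i' hi1' hi2' hxi hxi'
      obtain ⟨t, ht, hts⟩ := hWv (n+1) h1 h2
      unfold Wv at ht
      have hmul : (n+1)*(k-1) = n*(k-1) + (k-1) := by ring
      rcases Finset.mem_union.mp ht with ht | ht
      · rcases Finset.mem_union.mp ht with ht | ht
        · rcases Finset.mem_insert.mp ht with rfl | ht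
          · have := trmSat_false hts (Finset.mem_singleton_self _)
            rw [hv] at this; exact absurd this (by simp)
          · rw [Finset.mem_singleton] at ht; subst ht
            have hu : α (uv (n+1)) = true :=
              trmSat_true hts (Finset.mem_singleton_self _)
            have := U (n+1) h1 h2 hu i hi1 hi2
            rw [hxi] at this; exact absurd this (by simp)
        · -- t = insert (vv n, true) (negBlockTerm ...)
          by_cases hn : n+1 = 1
          · rw [if_pos hn] at ht; exact absurd ht (Finset.notMem_empty _)
          · rw [if_neg hn] at ht
            rw [Finset.mem_singleton] at ht; subst ht
            have hvn : α (vv (n+1-1)) = true :=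
              trmSat_true hts (Finset.mem_insert_self _ _)
            have hblk : ∀ i'', i'' ∈ blockX k (n+1) → α (xv i'') = false := by
              intro i'' hi''
              exact trmSat_false hts (Finset.mem_insert_of_mem
                (Finset.mem_image_of_mem _ hi''))
            have hile : i ≤ n*(k-1) := by
              by_contra hcon
              have := hblk i (mem_blockX_succ.mpr (by omega))
              rw [hxi] at this; exact absurd this (by simp)
            have hile' : i' ≤ n*(k-1) := by
              by_contra hcon
              have := hblk i' (mem_blockX_succ.mpr (by omega))
              rw [hxi'] at this; exact absurd this (by simp)
            exact ih (by omega) (by omega) (by simpa using hvn)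
              i hi1 hile i' hi1' hile' hxi hxi'
      · -- t in the image part
        obtain ⟨i0, hi0, rfl⟩ := Finset.mem_image.mp ht
        have halmost : ∀ i'', i'' ∈ blockX k (n+1) → i'' ≠ i0 →
            α (xv i'') = false := by
          intro i'' hi'' hne
          refine trmSat_false hts (Finset.mem_union_right _ ?_)
          exact Finset.mem_image_of_mem _ (Finset.mem_erase.mpr ⟨hne, hi''⟩)
        have hlow : ∀ i'', 0 < i'' → i'' ≤ n*(k-1) → α (xv i'') = false := by
          intro i'' h1'' h2''
          have hn : n ≠ 0 := by
            intro hcon; subst hcon; simp at h2''; omega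
          have hun : α (uv n) = true := by
            refine trmSat_true hts (Finset.mem_union_left _ ?_)
            rw [if_neg (by omega)]
            simpa using Finset.mem_singleton_self ((uv (n+1-1), true) : Lit V)
          exact U n (by omega) (by omega) hun i'' h1'' h2''
        have key : ∀ i'', 0 < i'' → i'' ≤ (n+1)*(k-1) → α (xv i'') = true →
            i'' = i0 := by
          intro i'' h1'' h2'' hx''
          by_contra hne
          by_cases hc : i'' ≤ n*(k-1)
          · have := hlow i'' h1'' hc
            rw [hx''] at this; exact absurd this (by simp)
          · have := halmost i'' (mem_blockX_succ.mpr (by omega)) hne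
            rw [hx''] at this; exact absurd this (by simp)
        rw [key i hi1 hi2 hxi, key i' hi1' hi2' hxi']
  -- now use Wlast
  intro i hi1 hi2 i' hi1' hi2' hxi hxi'
  obtain ⟨m', rfl⟩ : ∃ m', m = m' + 1 := ⟨m-1, by omega⟩
  have hmul : (m'+1)*(k-1) = m'*(k-1) + (k-1) := by ring
  have hm1 : 1 ≤ m' := by omega
  obtain ⟨t, ht, hts⟩ := hWl
  unfold Wlast at ht
  rcases Finset.mem_insert.mp ht with rfl | ht
  · have hvm : α (vv (m'+1-1)) = true :=
      trmSat_true hts (Finset.mem_insert_self _ _)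
    have hblk : ∀ i'', i'' ∈ blockX k (m'+1) → α (xv i'') = false := by
      intro i'' hi''
      exact trmSat_false hts (Finset.mem_insert_of_mem
        (Finset.mem_image_of_mem _ hi''))
    have hile : i ≤ m'*(k-1) := by
      by_contra hcon
      have := hblk i (mem_blockX_succ.mpr (by omega))
      rw [hxi] at this; exact absurd this (by simp)
    have hile' : i' ≤ m'*(k-1) := by
      by_contra hcon
      have := hblk i' (mem_blockX_succ.mpr (by omega))
      rw [hxi'] at this; exact absurd this (by simp)
    exact Vlem m' hm1 (by omega) (by simpa using hvm)
      i hi1 hile i' hi1' hile' hxi hxi'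
  · obtain ⟨i0, hi0, rfl⟩ := Finset.mem_image.mp ht
    have halmost : ∀ i'', i'' ∈ blockX k (m'+1) → i'' ≠ i0 →
        α (xv i'') = false := by
      intro i'' hi'' hne
      refine trmSat_false hts (Finset.mem_insert_of_mem ?_)
      exact Finset.mem_image_of_mem _ (Finset.mem_erase.mpr ⟨hne, hi''⟩)
    have hum : α (uv m') = true := by
      have := trmSat_true hts (Finset.mem_insert_self _ _)
      simpa using this
    have hlow : ∀ i'', 0 < i'' → i'' ≤ m'*(k-1) → α (xv i'') = false :=
      fun i'' h1'' h2'' => U m' hm1 (by omega) hum i'' h1'' h2''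
    have key : ∀ i'', 0 < i'' → i'' ≤ (m'+1)*(k-1) → α (xv i'') = true →
        i'' = i0 := by
      intro i'' h1'' h2'' hx''
      by_contra hne
      by_cases hc : i'' ≤ m'*(k-1)
      · have := hlow i'' h1'' hc
        rw [hx''] at this; exact absurd this (by simp)
      · have := halmost i'' (mem_blockX_succ.mpr (by omega)) hne
        rw [hx''] at this; exact absurd this (by simp)
    rw [key i hi1 hi2 hxi, key i' hi1' hi2' hxi']

end AuxProof

/-- For every `k > 1` and `m ≥ 2`, the `k`-DNF set `D'` implies
the `[k+1]`-XOR-CNF formula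
`G = ⋀_{ν ∈ [m(k-1)]} ⋁_{(i_1,…,i_{k-1}) ∈ [m(k-1)]^{k-1}} ⊕_{r=1}^{k+1} y^{ν,r}_{i_1,…,i_{k-1}}`:
every total truth assignment satisfying every formula of `D'` satisfies `G`. -/
theorem D'set_implies_G (m k : ℕ) (hk : 1 < k) (hm : 2 ≤ m) :
    ImpliesXor (D'set m k) (Gclauses m k) := by
  intro α hsat C hC
  obtain ⟨ν, hν, rfl⟩ := Finset.mem_image.mp hC
  rw [Finset.mem_Icc] at hν
  -- satisfaction of each copy of the weight constraints
  have hW : ∀ j, 1 ≤ j → j ≤ k-1 →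
      setSat α (Wset m k (DVar2.x j) (DVar2.xu j) (DVar2.xv j)) := by
    intro j h1 h2 F hF
    refine hsat F ?_
    unfold D'set
    exact Finset.mem_union_left _ (Finset.mem_union_left _
      (Finset.mem_biUnion.mpr ⟨j, Finset.mem_Icc.mpr ⟨h1, h2⟩, hF⟩))
  -- the positive formula
  have hpos : dnfSat α (D'pos m k ν) := by
    refine hsat _ ?_
    unfold D'set
    exact Finset.mem_union_left _ (Finset.mem_union_right _
      (Finset.mem_image_of_mem _ (Finset.mem_Icc.mpr hν)))
  obtain ⟨s, hs, hss⟩ := hpos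
  obtain ⟨t, ht, rfl⟩ := Finset.mem_image.mp hs
  have hy1 : α (DVar2.y ν 1 t) = true :=
    trmSat_true hss (Finset.mem_insert_self _ _)
  have hxt : ∀ j : Fin (k-1), α (DVar2.x (j.1+1) (t j)) = true := by
    intro j
    refine trmSat_true hss (Finset.mem_insert_of_mem ?_)
    exact Finset.mem_image_of_mem _ (Finset.mem_univ j)
  have htmem : ∀ j : Fin (k-1), 0 < t j ∧ t j ≤ m*(k-1) := by
    intro j
    have := (Fintype.mem_piFinset.mp ht) j
    rw [Finset.mem_Icc] at this
    omega
  -- uniqueness of the satisfied x-tuple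
  have huniq : ∀ t' ∈ tuples m k,
      (∀ j : Fin (k-1), α (DVar2.x (j.1+1) (t' j)) = true) → t' = t := by
    intro t' ht' hx'
    funext j
    have hmem' := (Fintype.mem_piFinset.mp ht') j
    rw [Finset.mem_Icc] at hmem'
    have hj1 : 1 ≤ j.1 + 1 := by omega
    have hj2 : j.1 + 1 ≤ k - 1 := by have := j.2; omega
    exact Wset_atMostOne m k hm (DVar2.x (j.1+1)) (DVar2.xu (j.1+1))
      (DVar2.xv (j.1+1)) α (hW (j.1+1) hj1 hj2)
      (t' j) (by omega) (by omega) (t j) (htmem j).1 (htmem j).2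
      (hx' j) (hxt j)
  -- negative formulas
  have hyr : ∀ r, 2 ≤ r → r ≤ k+1 → α (DVar2.y ν r t) = false := by
    intro r hr1 hr2
    have hneg : dnfSat α (D'neg m k ν r) := by
      refine hsat _ ?_
      unfold D'set
      refine Finset.mem_union_right _ (Finset.mem_biUnion.mpr
        ⟨ν, Finset.mem_Icc.mpr hν, ?_⟩)
      exact Finset.mem_image_of_mem _ (Finset.mem_Icc.mpr ⟨hr1, hr2⟩)
    obtain ⟨s', hs', hss'⟩ := hneg
    obtain ⟨t', ht', rfl⟩ := Finset.mem_image.mp hs'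
    have hx' : ∀ j : Fin (k-1), α (DVar2.x (j.1+1) (t' j)) = true := by
      intro j
      refine trmSat_true hss' (Finset.mem_insert_of_mem ?_)
      exact Finset.mem_image_of_mem _ (Finset.mem_univ j)
    have := huniq t' ht' hx'
    subst this
    exact trmSat_false hss' (Finset.mem_insert_self _ _)
  -- conclude the clause is satisfied
  refine ⟨(yBlock k ν t, true), Finset.mem_image_of_mem _ ht, ?_⟩
  have hfilter : (yBlock k ν t).filter (fun v => α v = true)
      = {DVar2.y ν 1 t} := by
    ext v
    simp only [Finset.mem_filter, Finset.mem_singleton, yBlock,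
      Finset.mem_image, Finset.mem_Icc]
    constructor
    · rintro ⟨⟨r, ⟨hr1, hr2⟩, rfl⟩, hv⟩
      have hr : r = 1 := by
        by_contra hcon
        have := hyr r (by omega) hr2
        rw [hv] at this; exact absurd this (by simp)
      rw [hr]
    · rintro rfl
      exact ⟨⟨1, ⟨le_refl 1, by omega⟩, rfl⟩, hy1⟩
  simp [xorLitVal, xorVal, hfilter]

end PaperKDNF
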